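/- Let μ be a Borel probability measure on C([0,1]) with support Γ, and let ν be a μ-invariant Borel probability measure on [0,1]. If for every x ∈ [0,1) there exists g ∈ Γ with g(x) > x, then 1 belongs to the support of ν. -/

import Mathlib

open MeasureTheory Set

/-- The topological support of a Borel measure. -/
def msupport {X : Type*} [TopologicalSpace X] [MeasurableSpace X] (μ : Measure X) : Set X :=
  {x | ∀ U : Set X, IsOpen U → x ∈ U → 0 < μ U}

/-!
Let `m` be the largest point of `supp ν`, so that `ν (m, 1] = 0`. If `m < 1`, some `g ∈ Γ`
has `g m > m`; by joint continuity of evaluation, `h x > m` for all `h` near `g` and `x` near `m`.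
These neighbourhoods have positive `μ`- and `ν`-measure, so invariance gives
`0 = ν (m, 1] = ∫ ν (h⁻¹ (m, 1]) dμ(h) > 0`, a contradiction.
-/

lemma msupport_eq_support {X : Type*} [TopologicalSpace X] [MeasurableSpace X]
    (μ : Measure X) : msupport μ = μ.support := by
  ext x
  simp only [msupport, Measure.support_eq_forall_isOpen, mem_ofPred_eq]
  exact forall_congr' fun _ => Imp.swap

lemma apply_le_of_measure_Ioi_eq_zero {X : Type*} [TopologicalSpace X] [LinearOrder X]
    [OrderClosedTopology X] [LocallyCompactSpace X] [MeasurableSpace X]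
    [MeasurableSpace C(X, X)] [OpensMeasurableSpace C(X, X)]
    {μ : Measure C(X, X)} {ν : Measure X} {m : X}
    (hinv : ν (Ioi m) = ∫⁻ g, ν ((g : X → X) ⁻¹' Ioi m) ∂μ)
    (hm : m ∈ ν.support) (hnull : ν (Ioi m) = 0) {g : C(X, X)} (hg : g ∈ μ.support) :
    g m ≤ m := by
  by_contra! hgm
  have hopen : IsOpen ((fun p : C(X, X) × X => p.1 p.2) ⁻¹' Ioi m) :=
    continuous_eval.isOpen_preimage _ isOpen_Ioi
  obtain ⟨V, W, hV, hW, hgV, hmW, hVW⟩ := isOpen_prod_iff.mp hopen g m hgm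
  have hνW : 0 < ν W := (Measure.mem_support_iff_forall m).mp hm W (hW.mem_nhds hmW)
  have hμV : 0 < μ V := (Measure.mem_support_iff_forall g).mp hg V (hV.mem_nhds hgV)
  have hpush : ∀ h ∈ V, ν W ≤ ν ((h : X → X) ⁻¹' Ioi m) :=
    fun h hh => measure_mono fun x hx => hVW (mk_mem_prod hh hx)
  have : ν W * μ V ≤ 0 := calc
    ν W * μ V = ∫⁻ _ in V, ν W ∂μ := (setLIntegral_const V _).symm
    _ ≤ ∫⁻ h in V, ν ((h : X → X) ⁻¹' Ioi m) ∂μ := setLIntegral_mono' hV.measurableSet hpush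
    _ ≤ ∫⁻ h, ν ((h : X → X) ⁻¹' Ioi m) ∂μ := setLIntegral_le_lintegral _ _
    _ = 0 := hinv ▸ hnull
  exact (ENNReal.mul_pos hνW.ne' hμV.ne').not_ge this

theorem stmt_6_general {mC : MeasurableSpace C(unitInterval, unitInterval)}
    [BorelSpace C(unitInterval, unitInterval)]
    (μ : Measure C(unitInterval, unitInterval))
    (ν : Measure unitInterval) [IsProbabilityMeasure ν]
    (hinv : ∀ A : Set unitInterval, MeasurableSet A →
      ν A = ∫⁻ g, ν ((g : unitInterval → unitInterval) ⁻¹' A) ∂μ)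
    (hdec : ∀ x : unitInterval, x < 1 →
      ∃ g ∈ msupport μ, x < (g : unitInterval → unitInterval) x) :
    (1 : unitInterval) ∈ msupport ν := by
  rw [msupport_eq_support] at hdec ⊢
  obtain ⟨m, hm, hmax⟩ :=
    Measure.isClosed_support.isCompact.exists_isGreatest (Measure.nonempty_support (NeZero.ne ν))
  have hnull : ν (Ioi m) = 0 :=
    measure_mono_null (fun x hx hxS => (hmax hxS).not_gt hx) Measure.measure_compl_support
  rcases (unitInterval.le_one' : m ≤ 1).eq_or_lt with rfl | hm1
  · exact hm
  obtain ⟨g, hg, hgm⟩ := hdec m hm1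
  exact absurd hgm (apply_le_of_measure_Ioi_eq_zero (hinv _ measurableSet_Ioi) hm hnull hg).not_gt

/-- Let `μ` be a Borel probability measure on `C([0,1])` with support `Γ` and let `ν`
be a `μ`-invariant Borel probability measure on `[0,1]`. If for every `x ∈ [0,1)` there
is `g ∈ Γ` with `g(x) > x`, then `1 ∈ supp ν`. -/
theorem stmt_6 {mC : MeasurableSpace C(unitInterval, unitInterval)}
    [BorelSpace C(unitInterval, unitInterval)]
    (μ : Measure C(unitInterval, unitInterval)) [IsProbabilityMeasure μ]
    (ν : Measure unitInterval) [IsProbabilityMeasure ν]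
    (hinv : ∀ A : Set unitInterval, MeasurableSet A →
      ν A = ∫⁻ g, ν ((g : unitInterval → unitInterval) ⁻¹' A) ∂μ)
    (hdec : ∀ x : unitInterval, x < 1 →
      ∃ g ∈ msupport μ, x < (g : unitInterval → unitInterval) x) :
    (1 : unitInterval) ∈ msupport ν :=
  stmt_6_general (mC := mC) μ ν hinv hdec
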